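/- The spiral map φ (as defined) is injective on the open rectangle (0,A)×(0,B): if φ(x₁,y₁) = φ(x₂,y₂) with both points in (0,A)×(0,B), then (x₁,y₁) = (x₂,y₂). -/
import Mathlib


open Real

/-- The spiral map φ is injective on the open rectangle (0,A)×(0,B). -/
theorem stmt4 (A B lam delta r : ℝ) (hA : 0 < A) (hB : 0 < B) (hlam : 0 < lam)
    (hdelta : 0 ≤ delta) (hr : 0 ≤ r)
    (phi : ℝ × ℝ → ℝ × ℝ)
    (hphi : ∀ p : ℝ × ℝ, phi p =
      (Real.sqrt ((p.2 * lam + r + (p.1 / lam) * (B * lam + delta)) / π) *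
         Real.cos (2 * π * (p.1 / lam)),
       Real.sqrt ((p.2 * lam + r + (p.1 / lam) * (B * lam + delta)) / π) *
         Real.sin (2 * π * (p.1 / lam)))) :
    Set.InjOn phi (Set.Ioo 0 A ×ˢ Set.Ioo 0 B) := by
  rintro ⟨x₁, y₁⟩ ⟨hx₁, hy₁⟩ ⟨x₂, y₂⟩ ⟨hx₂, hy₂⟩ heq
  simp only [Set.mem_Ioo] at hx₁ hy₁ hx₂ hy₂
  rw [hphi, hphi] at heq
  simp only [Prod.mk.injEq] at heq
  obtain ⟨e1, e2⟩ := heq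
  set I₁ : ℝ := y₁ * lam + r + x₁ / lam * (B * lam + delta) with hI₁def
  set I₂ : ℝ := y₂ * lam + r + x₂ / lam * (B * lam + delta) with hI₂def
  have hBd : 0 < B * lam + delta := by positivity
  have hI₁ : 0 < I₁ := by
    have h1 : 0 < y₁ * lam := mul_pos hy₁.1 hlam
    have h2 : 0 < x₁ / lam * (B * lam + delta) := mul_pos (div_pos hx₁.1 hlam) hBd
    simp only [hI₁def]; linarith
  have hI₂ : 0 < I₂ := by
    have h1 : 0 < y₂ * lam := mul_pos hy₂.1 hlam
    have h2 : 0 < x₂ / lam * (B * lam + delta) := mul_pos (div_pos hx₂.1 hlam) hBd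
    simp only [hI₂def]; linarith
  set s₁ : ℝ := Real.sqrt (I₁ / π) with hs₁def
  set s₂ : ℝ := Real.sqrt (I₂ / π) with hs₂def
  have hs₁sq : s₁ ^ 2 = I₁ / π := Real.sq_sqrt (le_of_lt (div_pos hI₁ Real.pi_pos))
  have hs₂sq : s₂ ^ 2 = I₂ / π := Real.sq_sqrt (le_of_lt (div_pos hI₂ Real.pi_pos))
  have hs₁pos : 0 < s₁ := Real.sqrt_pos.2 (div_pos hI₁ Real.pi_pos)
  have e1' : (s₁ * Real.cos (2 * π * (x₁ / lam))) ^ 2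
      = (s₂ * Real.cos (2 * π * (x₂ / lam))) ^ 2 := by rw [e1]
  have e2' : (s₁ * Real.sin (2 * π * (x₁ / lam))) ^ 2
      = (s₂ * Real.sin (2 * π * (x₂ / lam))) ^ 2 := by rw [e2]
  have t1 : Real.cos (2 * π * (x₁ / lam)) ^ 2 + Real.sin (2 * π * (x₁ / lam)) ^ 2 = 1 :=
    Real.cos_sq_add_sin_sq _
  have t2 : Real.cos (2 * π * (x₂ / lam)) ^ 2 + Real.sin (2 * π * (x₂ / lam)) ^ 2 = 1 :=
    Real.cos_sq_add_sin_sq (2 * π * (x₂ / lam))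
  have hssq : s₁ ^ 2 = s₂ ^ 2 := by linear_combination e1' + e2' - s₁ ^ 2 * t1 + s₂ ^ 2 * t2
  have hII : I₁ = I₂ := by
    have := hs₁sq ▸ hs₂sq ▸ hssq
    field_simp at this
    exact this
  have hss : s₁ = s₂ := by rw [hs₁def, hs₂def, hII]
  rw [← hss] at e1 e2
  have hcos : Real.cos (2 * π * (x₁ / lam)) = Real.cos (2 * π * (x₂ / lam)) :=
    mul_left_cancel₀ (ne_of_gt hs₁pos) e1
  have hsin : Real.sin (2 * π * (x₁ / lam)) = Real.sin (2 * π * (x₂ / lam)) :=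
    mul_left_cancel₀ (ne_of_gt hs₁pos) e2
  have hang := Real.Angle.cos_sin_inj hcos hsin
  rw [Real.Angle.angle_eq_iff_two_pi_dvd_sub] at hang
  obtain ⟨k, hk⟩ := hang
  have hpi : (π : ℝ) ≠ 0 := Real.pi_ne_zero
  have hx : x₁ / lam - x₂ / lam = k := by
    have h2 : (2 : ℝ) * π ≠ 0 := by positivity
    have h3 : 2 * π * (x₁ / lam - x₂ / lam) = 2 * π * (k : ℝ) := by linear_combination hk
    exact mul_left_cancel₀ h2 h3
  -- From I₁ = I₂: (y₁ - y₂) * lam = -(k) * (B*lam + delta)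
  have hIeq : (y₁ - y₂) * lam = -(k : ℝ) * (B * lam + delta) := by
    simp only [hI₁def, hI₂def] at hII
    linear_combination hII - (B * lam + delta) * hx
  have hk0 : (k : ℝ) = 0 := by
    by_contra h
    have hk1 : 1 ≤ |(k : ℝ)| := by
      have : k ≠ 0 := by exact_mod_cast fun h' => h (by exact_mod_cast h')
      exact_mod_cast Int.one_le_abs this
    have hbound : |(y₁ - y₂) * lam| < B * lam := by
      rw [abs_mul, abs_of_pos hlam]
      have : |y₁ - y₂| < B := abs_sub_lt_of_nonneg_of_lt (le_of_lt hy₁.1) hy₁.2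
        (le_of_lt hy₂.1) hy₂.2
      exact mul_lt_mul_of_pos_right this hlam
    have : |(y₁ - y₂) * lam| = |(k : ℝ)| * (B * lam + delta) := by
      rw [hIeq, abs_mul, abs_neg, abs_of_pos hBd]
    have h1 : B * lam + delta ≤ |(k : ℝ)| * (B * lam + delta) :=
      le_mul_of_one_le_left hBd.le hk1
    have h2 : 0 < B * lam := mul_pos hB hlam
    linarith
  have hxeq : x₁ = x₂ := by
    rw [hk0] at hx
    field_simp at hx
    linarith
  have hyeq : y₁ = y₂ := by
    rw [hk0] at hIeq
    simp at hIeq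
    rcases hIeq with h | h
    · linarith
    · exact absurd h (ne_of_gt hlam)
  simp [hxeq, hyeq]
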